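/- arXiv:1903.09115 — 2 statements merged into one kernel-verified Lean document; each statement's English description precedes it below -/
import Mathlib

section
/- Let L₀(s₀) = c₀ + s₀m₀ and L₁(s₁) = c₁ + s₁m₁ with q = m₀ × m₁ ≠ 0, t = c₀ − c₁, and let r₀ = c₀ + (q · (m₁ × t)/‖q‖²) m₀ and r₁ = c₁ + (q · (m₀ × t)/‖q‖²) m₁. Then for all s₀, s₁ ∈ ℝ, ‖r₀ − r₁‖ ≤ ‖(c₀ + s₀m₀) − (c₁ + s₁m₁)‖; i.e., (r₀, r₁) is a closest pair of points between the two lines. -/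
/-!
Since `m₀ × m₁ ≠ 0`, the vectors `m₀, m₁, q = m₀ × m₁` form a basis, and expanding `t = c₀ - c₁`
in it shows `r₀ - r₁ = (⟪q, t⟫ / ‖q‖²) • q`. This is orthogonal to both direction vectors, while
any other difference of points of the two lines differs from `r₀ - r₁` by a combination of
`m₀` and `m₁`; Pythagoras gives the inequality.
-/

open RealInnerProductSpace

noncomputable def cross3 (a b : EuclideanSpace ℝ (Fin 3)) : EuclideanSpace ℝ (Fin 3) :=
  (WithLp.equiv 2 (Fin 3 → ℝ)).symm
    (crossProduct (WithLp.equiv 2 (Fin 3 → ℝ) a) (WithLp.equiv 2 (Fin 3 → ℝ) b))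

lemma norm_le_norm_add_of_inner_eq_zero {E : Type*} [NormedAddCommGroup E]
    [InnerProductSpace ℝ E] {w v : E} (h : ⟪w, v⟫ = 0) : ‖w‖ ≤ ‖w + v‖ := by
  rw [mul_self_le_mul_self_iff (norm_nonneg _) (norm_nonneg _),
    norm_add_sq_eq_norm_sq_add_norm_sq_real h]
  exact le_add_of_nonneg_right (mul_self_nonneg _)

lemma cross3_apply (a b : EuclideanSpace ℝ (Fin 3)) (i : Fin 3) :
    cross3 a b i = ![a 1 * b 2 - a 2 * b 1, a 2 * b 0 - a 0 * b 2, a 0 * b 1 - a 1 * b 0] i := by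
  simp only [cross3, cross_apply]; rfl

lemma inner_fin_three (x y : EuclideanSpace ℝ (Fin 3)) :
    ⟪x, y⟫ = x 0 * y 0 + x 1 * y 1 + x 2 * y 2 := by
  simp [PiLp.inner_apply, Fin.sum_univ_three, mul_comm]

lemma inner_cross3_self_left (a b : EuclideanSpace ℝ (Fin 3)) : ⟪cross3 a b, a⟫ = 0 := by
  simp [EuclideanSpace.inner_eq_star_dotProduct, cross3, dot_self_cross]

lemma inner_cross3_self_right (a b : EuclideanSpace ℝ (Fin 3)) : ⟪cross3 a b, b⟫ = 0 := by
  simp [EuclideanSpace.inner_eq_star_dotProduct, cross3, dot_cross_self]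

/-- The coordinates of `t` in the basis `m₀, m₁, m₀ × m₁`, each scaled by `‖m₀ × m₁‖²`. -/
lemma norm_cross3_sq_smul (m₀ m₁ t : EuclideanSpace ℝ (Fin 3)) :
    ‖cross3 m₀ m₁‖ ^ 2 • t = ⟪cross3 m₀ m₁, t⟫ • cross3 m₀ m₁
      - ⟪cross3 m₀ m₁, cross3 m₁ t⟫ • m₀ + ⟪cross3 m₀ m₁, cross3 m₀ t⟫ • m₁ := by
  rw [← real_inner_self_eq_norm_sq]
  ext i
  simp only [inner_fin_three, cross3_apply, PiLp.add_apply, PiLp.sub_apply, PiLp.smul_apply,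
    smul_eq_mul]
  fin_cases i <;> simp <;> ring

lemma closest_points_sub_eq_smul_cross3 (c₀ c₁ m₀ m₁ : EuclideanSpace ℝ (Fin 3))
    (hq : cross3 m₀ m₁ ≠ 0) :
    c₀ + (⟪cross3 m₀ m₁, cross3 m₁ (c₀ - c₁)⟫ / ‖cross3 m₀ m₁‖ ^ 2) • m₀
        - (c₁ + (⟪cross3 m₀ m₁, cross3 m₀ (c₀ - c₁)⟫ / ‖cross3 m₀ m₁‖ ^ 2) • m₁)
      = (⟪cross3 m₀ m₁, c₀ - c₁⟫ / ‖cross3 m₀ m₁‖ ^ 2) • cross3 m₀ m₁ := by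
  have hq2 : ‖cross3 m₀ m₁‖ ^ 2 ≠ 0 := by positivity
  apply smul_right_injective _ hq2
  simp only [smul_sub, smul_add, smul_smul, mul_div_cancel₀ _ hq2]
  linear_combination (norm := module) norm_cross3_sq_smul m₀ m₁ (c₀ - c₁)

/-- (r₀, r₁) is a closest pair of points between the two lines. -/
theorem closest_points_minimize (c₀ c₁ m₀ m₁ : EuclideanSpace ℝ (Fin 3))
    (hq : cross3 m₀ m₁ ≠ 0) :
    let q := cross3 m₀ m₁
    let t := c₀ - c₁
    let r₀ := c₀ + (⟪q, cross3 m₁ t⟫ / ‖q‖ ^ 2) • m₀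
    let r₁ := c₁ + (⟪q, cross3 m₀ t⟫ / ‖q‖ ^ 2) • m₁
    ∀ s₀ s₁ : ℝ, ‖r₀ - r₁‖ ≤ ‖(c₀ + s₀ • m₀) - (c₁ + s₁ • m₁)‖ := by
  intro q t r₀ r₁ s₀ s₁
  set a := ⟪q, cross3 m₁ t⟫ / ‖q‖ ^ 2
  set b := ⟪q, cross3 m₀ t⟫ / ‖q‖ ^ 2
  have hq_perp : ⟪q, (s₀ - a) • m₀ - (s₁ - b) • m₁⟫ = 0 := by
    simp only [q, inner_sub_right, real_inner_smul_right, inner_cross3_self_left,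
      inner_cross3_self_right, mul_zero, sub_zero]
  have hperp : ⟪r₀ - r₁, (s₀ - a) • m₀ - (s₁ - b) • m₁⟫ = 0 := by
    rw [closest_points_sub_eq_smul_cross3 c₀ c₁ m₀ m₁ hq, real_inner_smul_left, hq_perp, mul_zero]
  calc ‖r₀ - r₁‖ ≤ ‖r₀ - r₁ + ((s₀ - a) • m₀ - (s₁ - b) • m₁)‖ :=
        norm_le_norm_add_of_inner_eq_zero hperp
    _ = ‖(c₀ + s₀ • m₀) - (c₁ + s₁ • m₁)‖ := by congr 1; simp only [r₀, r₁]; module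
end

section
/- Let L₀(s) = c₀ + s m₀ and L₁(s) = c₁ + s m₁ be skew lines in ℝ³, t = c₀ − c₁, n₁ = m₁ × t, and assume m₁ ≠ 0, n₁ ≠ 0, m₀ a unit vector. For any unit vector m₀' with n₁ · m₀' = 0 (so the line through c₀ with direction m₀' lies in the plane containing c₀ and L₁), the angle θ between m₀ and the line spanned by m₀' satisfies sin θ ≥ |n̂₁ · m₀|, where n̂₁ = n₁/‖n₁‖. Moreover equality is attained when m₀' is the unit vector in the direction of the orthogonal projection of m₀ onto the plane with normal n₁. -/
open RealInnerProductSpace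

/-- Among unit directions in the plane through c₀ containing L₁, the angle to m₀ is at
least arcsin |n̂₁ · m₀|, with equality for the projected direction. -/
theorem min_angle_in_plane (c₀ c₁ m₀ m₁ : EuclideanSpace ℝ (Fin 3))
    (hq : cross3 m₀ m₁ ≠ 0)
    (hskew : ¬ ∃ s₀ s₁ : ℝ, c₀ + s₀ • m₀ = c₁ + s₁ • m₁)
    (hm₁ : m₁ ≠ 0) (hm₀ : ‖m₀‖ = 1)
    (hn : cross3 m₁ (c₀ - c₁) ≠ 0) :
    let n₁ := cross3 m₁ (c₀ - c₁)
    let nhat := ‖n₁‖⁻¹ • n₁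
    (∀ m₀' : EuclideanSpace ℝ (Fin 3), ‖m₀'‖ = 1 → ⟪n₁, m₀'⟫ = 0 →
      Real.sin (Real.arccos |⟪m₀, m₀'⟫|) ≥ |⟪nhat, m₀⟫|) ∧
    (∀ p : EuclideanSpace ℝ (Fin 3), p = m₀ - ⟪nhat, m₀⟫ • nhat → p ≠ 0 →
      Real.sin (Real.arccos |⟪m₀, ‖p‖⁻¹ • p⟫|) = |⟪nhat, m₀⟫|) := by
  intro n₁ nhat
  have hnn : ‖n₁‖ ≠ 0 := norm_ne_zero_iff.mpr hn
  have hnhat : ‖nhat‖ = 1 := by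
    rw [norm_smul, norm_inv, norm_norm, inv_mul_cancel₀ hnn]
  set a : ℝ := ⟪nhat, m₀⟫ with ha
  -- norm² of projection
  have hpnorm : ∀ p : EuclideanSpace ℝ (Fin 3), p = m₀ - a • nhat → ‖p‖ ^ 2 = 1 - a ^ 2 := by
    intro p hp
    have h1 : ⟪m₀, a • nhat⟫ = a * a := by
      rw [real_inner_smul_right, real_inner_comm]
    have := @norm_sub_sq_real (EuclideanSpace ℝ (Fin 3)) _ _ m₀ (a • nhat)
    rw [hp, this, h1, norm_smul, hnhat, hm₀]
    simp [abs_mul_abs_self]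
    ring
  constructor
  · intro m₀' hm' hperp
    have hperp' : ⟪nhat, m₀'⟫ = 0 := by
      simp only [nhat, real_inner_smul_left, hperp, mul_zero]
    set p : EuclideanSpace ℝ (Fin 3) := m₀ - a • nhat with hp
    have hinner : ⟪m₀, m₀'⟫ = ⟪p, m₀'⟫ := by
      rw [hp, inner_sub_left, real_inner_smul_left, hperp', mul_zero, sub_zero]
    have hle : |⟪m₀, m₀'⟫| ≤ ‖p‖ := by
      rw [hinner]
      calc |⟪p, m₀'⟫| ≤ ‖p‖ * ‖m₀'‖ := abs_real_inner_le_norm p m₀'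
        _ = ‖p‖ := by rw [hm', mul_one]
    have hsq : ⟪m₀, m₀'⟫ ^ 2 ≤ 1 - a ^ 2 := by
      rw [← hpnorm p rfl]
      calc ⟪m₀, m₀'⟫ ^ 2 = |⟪m₀, m₀'⟫| ^ 2 := (sq_abs _).symm
        _ ≤ ‖p‖ ^ 2 := by
            apply pow_le_pow_left₀ (abs_nonneg _) hle
    rw [Real.sin_arccos]
    have : a ^ 2 ≤ 1 - |⟪m₀, m₀'⟫| ^ 2 := by
      rw [sq_abs]; linarith
    calc |a| = Real.sqrt (a ^ 2) := (Real.sqrt_sq_eq_abs a).symm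
      _ ≤ Real.sqrt (1 - |⟪m₀, m₀'⟫| ^ 2) := Real.sqrt_le_sqrt this
  · intro p hp hpne
    have hpn : ‖p‖ ^ 2 = 1 - a ^ 2 := hpnorm p hp
    have hnp : ⟪nhat, p⟫ = 0 := by
      rw [hp, inner_sub_right, real_inner_smul_right, real_inner_self_eq_norm_sq, hnhat]
      ring
    have hmp : ⟪m₀, p⟫ = ‖p‖ ^ 2 := by
      have : m₀ = p + a • nhat := by rw [hp]; abel
      rw [this, inner_add_left, real_inner_smul_left, hnp, real_inner_self_eq_norm_sq]
      ring
    have hinner : ⟪m₀, ‖p‖⁻¹ • p⟫ = ‖p‖ := by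
      have hne : ‖p‖ ≠ 0 := norm_ne_zero_iff.mpr hpne
      rw [real_inner_smul_right, hmp, sq]
      field_simp
    have hple : ‖p‖ ≤ 1 := by nlinarith [norm_nonneg p, sq_nonneg a]
    rw [hinner, abs_of_nonneg (norm_nonneg p), Real.sin_arccos,
      show 1 - ‖p‖ ^ 2 = a ^ 2 by linarith, Real.sqrt_sq_eq_abs]
end
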